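/- arXiv:1105.5004 — 5 statements merged into one kernel-verified Lean document; each statement's English description precedes it below -/
import Mathlib

section
/- Ghosh–Louis theorem (inequality part): Let (Ω,F,P) be a probability space, let G ⊆ F be a sub-σ-algebra (representing conditioning on the data y), and let θ₁,…,θₙ with n ≥ 2 be square-integrable real random variables. Writing θ̄ = (1/n)Σᵢθᵢ and mᵢ = E[θᵢ | G], one has almost surely E[(1/n)Σᵢ(θᵢ − θ̄)² | G] ≥ (1/n)Σᵢ(mᵢ − (1/n)Σⱼmⱼ)²; that is, the empirical variance of the vector of conditional means is bounded above by the conditional expectation of the empirical variance of the parameter ensemble. -/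
/-!
The empirical variance `x ↦ (1/n) ∑ᵢ (xᵢ - x̄)²` is a convex continuous function on `ℝⁿ`, being
a sum of squares of linear functionals. Applying the conditional Jensen inequality to it and to
the `ℝⁿ`-valued random vector `ω ↦ (θᵢ ω)ᵢ`, whose conditional expectation is computed
componentwise, gives the inequality.
-/

open MeasureTheory Set

lemma convexOn_finsetSum {𝕜 E β ι : Type*} [Semiring 𝕜] [PartialOrder 𝕜] [AddCommMonoid E]
    [AddCommMonoid β] [PartialOrder β] [IsOrderedAddMonoid β] [SMul 𝕜 E] [Module 𝕜 β]
    {s : Set E} (hs : Convex 𝕜 s) {f : ι → E → β} (t : Finset ι)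
    (hf : ∀ i ∈ t, ConvexOn 𝕜 s (f i)) : ConvexOn 𝕜 s fun x => ∑ i ∈ t, f i x := by
  induction t using Finset.cons_induction with
  | empty => simpa using convexOn_const (0 : β) hs
  | cons i t _ ih =>
    simp only [Finset.sum_cons]
    exact (hf i (t.mem_cons_self i)).add (ih fun j hj => hf j (Finset.mem_cons_of_mem hj))

lemma convexOn_linearMap_sq {E : Type*} [AddCommGroup E] [Module ℝ E] (ℓ : E →ₗ[ℝ] ℝ) :
    ConvexOn ℝ univ fun x => ℓ x ^ 2 := by
  have h := (even_two.convexOn_pow (𝕜 := ℝ)).comp_linearMap ℓ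
  rwa [preimage_univ] at h

noncomputable def empiricalVariance {n : ℕ} (x : Fin n → ℝ) : ℝ :=
  (1 / (n : ℝ)) * ∑ i, (x i - (1 / (n : ℝ)) * ∑ j, x j) ^ 2

section EmpiricalVariance

variable {n : ℕ}

lemma convexOn_empiricalVariance : ConvexOn ℝ univ (empiricalVariance (n := n)) := by
  let center (i : Fin n) : (Fin n → ℝ) →ₗ[ℝ] ℝ :=
    LinearMap.proj i - (1 / (n : ℝ)) • ∑ j, LinearMap.proj j
  have hcenter (i : Fin n) (x : Fin n → ℝ) : center i x = x i - (1 / (n : ℝ)) * ∑ j, x j := by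
    simp [center, LinearMap.sum_apply]
  have hsum := convexOn_finsetSum convex_univ Finset.univ
    fun i _ => convexOn_linearMap_sq (center i)
  have h := hsum.smul (c := 1 / (n : ℝ)) (by positivity)
  simp only [hcenter, smul_eq_mul] at h
  exact h

lemma continuous_empiricalVariance : Continuous (empiricalVariance (n := n)) := by
  unfold empiricalVariance
  fun_prop

lemma integrable_empiricalVariance {Ω : Type*} {mΩ : MeasurableSpace Ω} {μ : Measure Ω}
    [IsFiniteMeasure μ] {θ : Fin n → Ω → ℝ} (hθ : ∀ i, MemLp (θ i) 2 μ) :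
    Integrable (fun ω => empiricalVariance (θ · ω)) μ := by
  have hmean : MemLp (fun ω => (1 / (n : ℝ)) * ∑ j, θ j ω) 2 μ :=
    (memLp_finsetSum _ fun j _ => hθ j).const_mul _
  exact (integrable_finsetSum _ fun i _ => ((hθ i).sub hmean).integrable_sq).const_mul _

end EmpiricalVariance

section CondExpPi

variable {Ω ι : Type*} [Fintype ι] {m mΩ : MeasurableSpace Ω} {μ : Measure Ω}

lemma ae_condExp_pi_apply {E : ι → Type*} [∀ i, NormedAddCommGroup (E i)]
    [∀ i, NormedSpace ℝ (E i)] [∀ i, CompleteSpace (E i)] {f : Ω → Π i, E i}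
    (hf : Integrable f μ) : ∀ᵐ ω ∂μ, ∀ i, μ[f | m] ω i = μ[(f · i) | m] ω :=
  ae_all_iff.2 fun i => (ContinuousLinearMap.proj (R := ℝ) i).comp_condExp_comm hf

theorem ConvexOn.map_condExp_le_pi (hm : m ≤ mΩ) [SigmaFinite (μ.trim hm)]
    {φ : (ι → ℝ) → ℝ} (hφ : ConvexOn ℝ univ φ) (hφ_cont : LowerSemicontinuous φ)
    {θ : ι → Ω → ℝ} (hθ : ∀ i, Integrable (θ i) μ)
    (hφθ : Integrable (fun ω => φ (θ · ω)) μ) :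
    ∀ᵐ ω ∂μ, φ (fun i => μ[θ i | m] ω) ≤ μ[fun ω => φ (θ · ω) | m] ω := by
  have hΘ : Integrable (fun ω i => θ i ω) μ := Integrable.of_eval hθ
  filter_upwards [hφ.map_condExp_le_univ hm hφ_cont hΘ hφθ, ae_condExp_pi_apply (m := m) hΘ]
    with ω hjensen hcomponent
  rwa [← funext hcomponent]

end CondExpPi

theorem ghosh_louis_inequality_general
    {Ω : Type*} {mΩ : MeasurableSpace Ω} {μ : Measure Ω} [IsProbabilityMeasure μ]
    {G : MeasurableSpace Ω} (hG : G ≤ mΩ)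
    {n : ℕ} (θ : Fin n → Ω → ℝ)
    (hθ : ∀ i, MeasureTheory.MemLp (θ i) 2 μ) :
    ∀ᵐ ω ∂μ,
      (1 / (n : ℝ)) * ∑ i, ((μ[θ i|G]) ω - (1 / (n : ℝ)) * ∑ j, (μ[θ j|G]) ω) ^ 2
        ≤ (μ[fun ω' => (1 / (n : ℝ)) * ∑ i, (θ i ω' - (1 / (n : ℝ)) * ∑ j, θ j ω') ^ 2|G]) ω :=
  convexOn_empiricalVariance.map_condExp_le_pi hG
    continuous_empiricalVariance.lowerSemicontinuous
    (fun i => (hθ i).integrable one_le_two) (integrable_empiricalVariance hθ)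

/-- **Ghosh–Louis theorem (inequality part).** For square-integrable random variables
`θ₁, …, θₙ` (`n ≥ 2`) and a sub-σ-algebra `G`, the empirical variance of the vector of
conditional means is a.s. bounded above by the conditional expectation of the empirical
variance of the ensemble. -/
theorem ghosh_louis_inequality
    {Ω : Type*} {mΩ : MeasurableSpace Ω} {μ : Measure Ω} [IsProbabilityMeasure μ]
    {G : MeasurableSpace Ω} (hG : G ≤ mΩ)
    {n : ℕ} (hn : 2 ≤ n) (θ : Fin n → Ω → ℝ)
    (hθ : ∀ i, MeasureTheory.MemLp (θ i) 2 μ) :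
    ∀ᵐ ω ∂μ,
      (1 / (n : ℝ)) * ∑ i, ((μ[θ i|G]) ω - (1 / (n : ℝ)) * ∑ j, (μ[θ j|G]) ω) ^ 2
        ≤ (μ[fun ω' => (1 / (n : ℝ)) * ∑ i, (θ i ω' - (1 / (n : ℝ)) * ∑ j, θ j ω') ^ 2|G]) ω :=
  ghosh_louis_inequality_general hG θ hθ
end

section
/- Ghosh–Louis theorem (equality condition): In the setting of the Ghosh–Louis inequality — (Ω,F,P) a probability space, G ⊆ F a sub-σ-algebra, θ₁,…,θₙ (n ≥ 2) square-integrable real random variables, θ̄ = (1/n)Σᵢθᵢ, mᵢ = E[θᵢ|G] — the equality E[(1/n)Σᵢ(θᵢ − θ̄)² | G] = (1/n)Σᵢ(mᵢ − (1/n)Σⱼmⱼ)² holds almost surely if and only if for every i the random variable θᵢ − θ̄ has a degenerate conditional distribution given G, i.e. θᵢ − θ̄ = E[θᵢ − θ̄ | G] almost surely for every i = 1,…,n. -/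
/-!
For square-integrable `X`, the conditional variance `Var[X | G] = E[X² | G] - E[X | G]²` is a.s.
nonnegative, and it vanishes a.s. exactly when `X = E[X | G]` a.s., since it integrates to
`∫ (X - E[X | G])²`. For `Xᵢ = θᵢ - θ̄` the conditional expectations are `mᵢ - m̄` by linearity,
so the gap between the two sides of the Ghosh–Louis inequality is `(1/n) ∑ᵢ Var[Xᵢ | G]`, a sum of
a.s. nonnegative terms, which vanishes iff every term does.
-/

open MeasureTheory Filter ProbabilityTheory

namespace ProbabilityTheory

variable {Ω : Type*} {m m₀ : MeasurableSpace Ω} {μ : Measure[m₀] Ω}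

lemma condVar_nonneg (X : Ω → ℝ) : 0 ≤ᵐ[μ] Var[X; μ | m] :=
  condExp_nonneg (.of_forall fun _ => sq_nonneg _)

lemma condVar_ae_eq_zero_iff {X : Ω → ℝ} (hm : m ≤ m₀) [SigmaFinite (μ.trim hm)]
    (hX : Integrable ((X - μ[X | m]) ^ 2) μ) :
    Var[X; μ | m] =ᵐ[μ] 0 ↔ X =ᵐ[μ] μ[X | m] := by
  have hsq : (X - μ[X | m]) ^ 2 =ᵐ[μ] 0 ↔ X =ᵐ[μ] μ[X | m] := by
    simp [EventuallyEq, sub_eq_zero]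
  rw [← hsq]
  refine ⟨fun h => ?_, fun h => (condExp_congr_ae h).trans condExp_zero.eventuallyEq⟩
  have hint : ∫ ω, ((X - μ[X | m]) ^ 2) ω ∂μ = 0 := by
    rw [← integral_condExp hm]
    exact integral_eq_zero_of_ae h
  exact (integral_eq_zero_iff_of_nonneg (fun _ => sq_nonneg _) hX).mp hint

variable {ι : Type*} [Fintype ι]

lemma condExp_sub_mul_sum_ae_eq {θ : ι → Ω → ℝ} (hθ : ∀ j, Integrable (θ j) μ) (c : ℝ) (i : ι) :
    μ[fun ω => θ i ω - c * ∑ j, θ j ω | m] =ᵐ[μ]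
      fun ω => μ[θ i | m] ω - c * ∑ j, μ[θ j | m] ω := by
  have hfun : (fun ω => θ i ω - c * ∑ j, θ j ω) = θ i - c • ∑ j, θ j := by
    ext ω; simp
  rw [hfun]
  filter_upwards [condExp_sub (hθ i) ((integrable_finsetSum' Finset.univ fun j _ => hθ j).smul c) m,
    condExp_smul (m := m) c (∑ j, θ j), condExp_finsetSum (m := m) (s := Finset.univ)
      fun j _ => hθ j] with ω hsub hsmul hsum
  simp [hsub, hsmul, hsum]

variable [IsFiniteMeasure μ]

lemma condExp_sum_mul_sq_ae_eq (hm : m ≤ m₀) (w : ι → ℝ) {X : ι → Ω → ℝ}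
    (hX : ∀ i, MemLp (X i) 2 μ) :
    μ[fun ω => ∑ i, w i * X i ω ^ 2 | m] =ᵐ[μ]
      fun ω => ∑ i, w i * (Var[X i; μ | m] ω + μ[X i | m] ω ^ 2) := by
  have hfun : (fun ω => ∑ i, w i * X i ω ^ 2) = ∑ i, w i • X i ^ 2 := by
    ext ω; simp
  rw [hfun]
  have hvar : ∀ᵐ ω ∂μ, ∀ i, Var[X i; μ | m] ω = μ[X i ^ 2 | m] ω - μ[X i | m] ω ^ 2 :=
    ae_all_iff.2 fun i => condVar_ae_eq_condExp_sq_sub_sq_condExp hm (hX i)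
  have hsmul : ∀ᵐ ω ∂μ, ∀ i, μ[w i • X i ^ 2 | m] ω = w i * μ[X i ^ 2 | m] ω :=
    ae_all_iff.2 fun i => (condExp_smul (m := m) (w i) (X i ^ 2)).mono fun ω h => by simpa using h
  have hsum : μ[∑ i, w i • X i ^ 2 | m] =ᵐ[μ] ∑ i, μ[w i • X i ^ 2 | m] :=
    condExp_finsetSum (fun i _ => ((hX i).integrable_sq : Integrable (X i ^ 2) μ).smul (w i)) m
  filter_upwards [hsum, hvar, hsmul] with ω hsum hvar hsmul
  simp [hsum, hvar, hsmul]

theorem condExp_sum_mul_sq_ae_eq_iff (hm : m ≤ m₀) {w : ι → ℝ} (hw : ∀ i, 0 < w i)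
    {X : ι → Ω → ℝ} (hX : ∀ i, MemLp (X i) 2 μ) :
    (μ[fun ω => ∑ i, w i * X i ω ^ 2 | m] =ᵐ[μ] fun ω => ∑ i, w i * μ[X i | m] ω ^ 2) ↔
      ∀ i, X i =ᵐ[μ] μ[X i | m] := by
  have hV : ∀ᵐ ω ∂μ, ∀ i, 0 ≤ Var[X i; μ | m] ω := ae_all_iff.2 fun i => condVar_nonneg (X i)
  rw [(condExp_sum_mul_sq_ae_eq hm w hX).congr_left]
  calc _ ↔ ∀ᵐ ω ∂μ, ∀ i, Var[X i; μ | m] ω = 0 := eventually_congr <| hV.mono fun ω hω => by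
          simp only [mul_add, Finset.sum_add_distrib, add_eq_right]
          rw [Finset.sum_eq_zero_iff_of_nonneg fun i _ => mul_nonneg (hw i).le (hω i)]
          simp [(hw _).ne']
    _ ↔ ∀ i, Var[X i; μ | m] =ᵐ[μ] 0 := ae_all_iff
    _ ↔ _ := forall_congr' fun i => condVar_ae_eq_zero_iff hm
          ((hX i).sub ((hX i).condExp one_le_two)).integrable_sq

theorem condExp_mean_sq_ae_eq_iff (hm : m ≤ m₀) {n : ℕ} {X : Fin n → Ω → ℝ}
    (hX : ∀ i, MemLp (X i) 2 μ) :
    (μ[fun ω => 1 / (n : ℝ) * ∑ i, X i ω ^ 2 | m] =ᵐ[μ]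
      fun ω => 1 / (n : ℝ) * ∑ i, μ[X i | m] ω ^ 2) ↔ ∀ i, X i =ᵐ[μ] μ[X i | m] := by
  simp only [Finset.mul_sum]
  exact condExp_sum_mul_sq_ae_eq_iff hm (fun i => by have := i.pos; positivity) hX

end ProbabilityTheory

theorem ghosh_louis_equality_general
    {Ω : Type*} {mΩ : MeasurableSpace Ω} {μ : Measure Ω} [IsProbabilityMeasure μ]
    {G : MeasurableSpace Ω} (hG : G ≤ mΩ)
    {n : ℕ} (θ : Fin n → Ω → ℝ)
    (hθ : ∀ i, MeasureTheory.MemLp (θ i) 2 μ) :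
    ((μ[fun ω' => (1 / (n : ℝ)) * ∑ i, (θ i ω' - (1 / (n : ℝ)) * ∑ j, θ j ω') ^ 2|G])
        =ᵐ[μ]
      fun ω => (1 / (n : ℝ)) * ∑ i, ((μ[θ i|G]) ω - (1 / (n : ℝ)) * ∑ j, (μ[θ j|G]) ω) ^ 2)
    ↔ ∀ i, (fun ω => θ i ω - (1 / (n : ℝ)) * ∑ j, θ j ω)
        =ᵐ[μ] (μ[fun ω => θ i ω - (1 / (n : ℝ)) * ∑ j, θ j ω|G]) := by
  have hX : ∀ i, MemLp (fun ω => θ i ω - 1 / n * ∑ j, θ j ω) 2 μ := fun i =>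
    (hθ i).sub ((memLp_finsetSum _ fun j _ => hθ j).const_mul _)
  have hmean : ∀ᵐ ω ∂μ, ∀ i, μ[fun ω => θ i ω - 1 / n * ∑ j, θ j ω | G] ω =
      μ[θ i | G] ω - 1 / n * ∑ j, μ[θ j | G] ω :=
    ae_all_iff.2 fun i => condExp_sub_mul_sum_ae_eq (fun j => (hθ j).integrable one_le_two) _ i
  refine Iff.trans ?_ (condExp_mean_sq_ae_eq_iff hG hX)
  exact EventuallyEq.congr_right (hmean.mono fun ω hω => by simp only [hω])

/-- **Ghosh–Louis theorem (equality condition).** In the setting of the Ghosh–Louis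
inequality, equality holds almost surely if and only if every centred variable
`θᵢ − θ̄` has a degenerate conditional distribution given `G`, i.e. coincides a.s. with
its conditional expectation given `G`. -/
theorem ghosh_louis_equality
    {Ω : Type*} {mΩ : MeasurableSpace Ω} {μ : Measure Ω} [IsProbabilityMeasure μ]
    {G : MeasurableSpace Ω} (hG : G ≤ mΩ)
    {n : ℕ} (hn : 2 ≤ n) (θ : Fin n → Ω → ℝ)
    (hθ : ∀ i, MeasureTheory.MemLp (θ i) 2 μ) :
    ((μ[fun ω' => (1 / (n : ℝ)) * ∑ i, (θ i ω' - (1 / (n : ℝ)) * ∑ j, θ j ω') ^ 2|G])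
        =ᵐ[μ]
      fun ω => (1 / (n : ℝ)) * ∑ i, ((μ[θ i|G]) ω - (1 / (n : ℝ)) * ∑ j, (μ[θ j|G]) ω) ^ 2)
    ↔ ∀ i, (fun ω => θ i ω - (1 / (n : ℝ)) * ∑ j, θ j ω)
        =ᵐ[μ] (μ[fun ω => θ i ω - (1 / (n : ℝ)) * ∑ j, θ j ω|G]) :=
  ghosh_louis_equality_general hG θ hθ
end

section
/- Ghosh–Louis constrained Bayes estimator: Let n ≥ 2, let m ∈ ℝⁿ be a vector of posterior means with m̄ = (1/n)Σᵢmᵢ and S = (1/n)Σᵢ(mᵢ − m̄)² > 0, and let v ∈ ℝⁿ be a vector of nonnegative posterior variances with v̄ = (1/n)Σᵢvᵢ. Set ω = √(1 + v̄/S) and aᵢ* = ω·mᵢ + (1 − ω)·m̄ for i = 1,…,n. Then: (i) (1/n)Σᵢaᵢ* = m̄ and (1/n)Σᵢ(aᵢ* − m̄)² = S + v̄; and (ii) for every a ∈ ℝⁿ satisfying the two constraints (1/n)Σᵢaᵢ = m̄ and (1/n)Σᵢ(aᵢ − (1/n)Σⱼaⱼ)² = S + v̄, one has Σᵢ(vᵢ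 + (mᵢ − aᵢ*)²) ≤ Σᵢ(vᵢ + (mᵢ − aᵢ)²). Thus a* minimises the posterior expected summed squared error loss among all ensembles of point estimates whose empirical mean equals the posterior mean of the ensemble's empirical mean and whose empirical variance equals S + v̄. -/
/-!
Centre everything at `m̄`. The constraints fix the root-mean-square norms of `m − m̄` and
`a − m̄` at `√S` and `√(S + v̄)`, so by the reverse triangle inequality the mean squared distance
from `m` to any admissible `a` is at least `(√(S + v̄) − √S)²`. The estimator `a*` has
`a* − m̄ = ω (m − m̄)`, the positive multiple of `m − m̄` with the prescribed norm, and attains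
this bound; the term `Σ vᵢ` is common to both losses.
-/

open Finset

section EmpiricalMoments

variable {ι : Type*} [Fintype ι]

noncomputable def empMean (x : ι → ℝ) : ℝ := 1 / (Fintype.card ι : ℝ) * ∑ i, x i

noncomputable def empVar (x : ι → ℝ) : ℝ := empMean fun i => (x i - empMean x) ^ 2

theorem card_mul_empMean (x : ι → ℝ) : (Fintype.card ι : ℝ) * empMean x = ∑ i, x i := by
  rcases isEmpty_or_nonempty ι with hι | hι
  · simp
  · simp only [empMean]
    field_simp

theorem nonempty_of_empVar_ne_zero {x : ι → ℝ} (hx : empVar x ≠ 0) : Nonempty ι := by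
  by_contra h
  rw [not_nonempty_iff] at h
  simp [empVar, empMean] at hx

theorem empMean_affine [Nonempty ι] (c d : ℝ) (x : ι → ℝ) :
    empMean (fun i => c * x i + d) = c * empMean x + d := by
  simp only [empMean, sum_add_distrib, ← mul_sum, sum_const, card_univ, nsmul_eq_mul]
  field_simp

theorem empMean_const_mul (c : ℝ) (x : ι → ℝ) :
    empMean (fun i => c * x i) = c * empMean x := by
  simp only [empMean, ← mul_sum]
  ring

theorem empMean_nonneg {x : ι → ℝ} (hx : ∀ i, 0 ≤ x i) : 0 ≤ empMean x :=
  mul_nonneg (by positivity) (sum_nonneg fun i _ => hx i)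

theorem empVar_affine [Nonempty ι] (c d : ℝ) (x : ι → ℝ) :
    empVar (fun i => c * x i + d) = c ^ 2 * empVar x := by
  rw [empVar, empVar, empMean_affine c d x, ← empMean_const_mul (c ^ 2)]
  congr 1
  funext i
  ring

theorem sqrt_empMean_sq (x : ι → ℝ) :
    √(empMean fun i => x i ^ 2) = ‖WithLp.toLp 2 x‖ / √(Fintype.card ι) := by
  rw [EuclideanSpace.norm_eq, empMean, one_div_mul_eq_div,
    Real.sqrt_div (sum_nonneg fun i _ => sq_nonneg (x i))]
  simp only [Real.norm_eq_abs, sq_abs]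

theorem sq_sqrt_empMean_sq_sub_le (x y : ι → ℝ) :
    (√(empMean fun i => x i ^ 2) - √(empMean fun i => y i ^ 2)) ^ 2 ≤
      empMean fun i => (x i - y i) ^ 2 := by
  rw [← Real.sq_sqrt (empMean_nonneg fun i => sq_nonneg (x i - y i)), sqrt_empMean_sq,
    sqrt_empMean_sq, sqrt_empMean_sq, ← sub_div, div_pow, div_pow]
  gcongr ?_ / _
  rw [sq_le_sq, abs_norm]
  exact abs_norm_sub_norm_le (WithLp.toLp 2 x) (WithLp.toLp 2 y)

theorem empMean_sq_sub_interp_mean (c : ℝ) (x : ι → ℝ) :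
    (empMean fun i => (x i - (c * x i + (1 - c) * empMean x)) ^ 2) = (1 - c) ^ 2 * empVar x := by
  rw [empVar, ← empMean_const_mul ((1 - c) ^ 2)]
  congr 1
  funext i
  ring

theorem sq_sqrt_empVar_sub_le {x y : ι → ℝ} (hxy : empMean x = empMean y) :
    (√(empVar x) - √(empVar y)) ^ 2 ≤ empMean fun i => (x i - y i) ^ 2 := by
  rw [empVar, empVar]
  convert sq_sqrt_empMean_sq_sub_le (fun i => x i - empMean x) (fun i => y i - empMean y) using 4
  rw [hxy, sub_sub_sub_cancel_right]

end EmpiricalMoments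

theorem empMean_fin {n : ℕ} (x : Fin n → ℝ) : empMean x = 1 / (n : ℝ) * ∑ i, x i := by
  rw [empMean, Fintype.card_fin]

theorem constrained_bayes_estimator_general
    {n : ℕ} (m v : Fin n → ℝ) (hv : ∀ i, 0 ≤ v i)
    (mbar : ℝ) (hmbar : mbar = (1 / (n : ℝ)) * ∑ i, m i)
    (S : ℝ) (hS : S = (1 / (n : ℝ)) * ∑ i, (m i - mbar) ^ 2) (hSpos : 0 < S)
    (vbar : ℝ) (hvbar : vbar = (1 / (n : ℝ)) * ∑ i, v i)
    (ω : ℝ) (hω : ω = Real.sqrt (1 + vbar / S))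
    (astar : Fin n → ℝ) (hastar : ∀ i, astar i = ω * m i + (1 - ω) * mbar) :
    ((1 / (n : ℝ)) * ∑ i, astar i = mbar ∧
      (1 / (n : ℝ)) * ∑ i, (astar i - mbar) ^ 2 = S + vbar) ∧
    ∀ a : Fin n → ℝ,
      (1 / (n : ℝ)) * ∑ i, a i = mbar →
      (1 / (n : ℝ)) * ∑ i, (a i - (1 / (n : ℝ)) * ∑ j, a j) ^ 2 = S + vbar →
      ∑ i, (v i + (m i - astar i) ^ 2) ≤ ∑ i, (v i + (m i - a i) ^ 2) := by
  simp only [← empMean_fin] at *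
  subst hmbar
  replace hS : S = empVar m := hS
  have := nonempty_of_empVar_ne_zero (hS ▸ hSpos.ne')
  have hvbar_nonneg : 0 ≤ vbar := hvbar ▸ empMean_nonneg hv
  have hω_nonneg : 0 ≤ ω := hω ▸ Real.sqrt_nonneg _
  have hωS : ω ^ 2 * S = S + vbar := by
    rw [hω, Real.sq_sqrt (by positivity)]
    field_simp
  have hsqrt : √(S + vbar) = ω * √S := by
    rw [← hωS, Real.sqrt_mul (sq_nonneg ω), Real.sqrt_sq hω_nonneg]
  rw [show astar = fun i => ω * m i + (1 - ω) * empMean m from funext hastar]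
  have hmean : empMean (fun i => ω * m i + (1 - ω) * empMean m) = empMean m := by
    rw [empMean_affine]
    ring
  have hloss : (empMean fun i => (m i - (ω * m i + (1 - ω) * empMean m)) ^ 2) =
      (√S - √(S + vbar)) ^ 2 := by
    rw [empMean_sq_sub_interp_mean, ← hS, hsqrt]
    linear_combination -(1 - ω) ^ 2 * Real.sq_sqrt hSpos.le
  refine ⟨⟨hmean, ?_⟩, fun a ha hav => ?_⟩
  · calc _ = empVar fun i => ω * m i + (1 - ω) * empMean m := by rw [empVar, hmean]
      _ = S + vbar := by rw [empVar_affine, ← hS, hωS]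
  · replace hav : empVar a = S + vbar := hav
    simp only [sum_add_distrib, add_le_add_iff_left, ← card_mul_empMean]
    gcongr
    rw [hloss, ← hav, hS]
    exact sq_sqrt_empVar_sub_le ha.symm

/-- **Ghosh–Louis constrained Bayes estimator.** Given posterior means `m` with empirical
mean `mbar` and positive empirical variance `S`, and nonnegative posterior variances `v`
with mean `vbar`, the estimator `aᵢ* = ω mᵢ + (1 − ω) mbar` with `ω = √(1 + vbar/S)`
matches the prescribed empirical mean `mbar` and empirical variance `S + vbar`, and
minimises the posterior expected summed squared error loss `Σᵢ (vᵢ + (mᵢ − aᵢ)²)` among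
all point-estimate vectors satisfying these two constraints. -/
theorem constrained_bayes_estimator
    {n : ℕ} (hn : 2 ≤ n) (m v : Fin n → ℝ) (hv : ∀ i, 0 ≤ v i)
    (mbar : ℝ) (hmbar : mbar = (1 / (n : ℝ)) * ∑ i, m i)
    (S : ℝ) (hS : S = (1 / (n : ℝ)) * ∑ i, (m i - mbar) ^ 2) (hSpos : 0 < S)
    (vbar : ℝ) (hvbar : vbar = (1 / (n : ℝ)) * ∑ i, v i)
    (ω : ℝ) (hω : ω = Real.sqrt (1 + vbar / S))
    (astar : Fin n → ℝ) (hastar : ∀ i, astar i = ω * m i + (1 - ω) * mbar) :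
    ((1 / (n : ℝ)) * ∑ i, astar i = mbar ∧
      (1 / (n : ℝ)) * ∑ i, (astar i - mbar) ^ 2 = S + vbar) ∧
    ∀ a : Fin n → ℝ,
      (1 / (n : ℝ)) * ∑ i, a i = mbar →
      (1 / (n : ℝ)) * ∑ i, (a i - (1 / (n : ℝ)) * ∑ j, a j) ^ 2 = S + vbar →
      ∑ i, (v i + (m i - astar i) ^ 2) ≤ ∑ i, (v i + (m i - a i) ^ 2) :=
  constrained_bayes_estimator_general m v hv mbar hmbar S hS hSpos vbar hvbar ω hω astar hastar
end

section
/- Optimality of posterior quantiles under weighted threshold classification loss: Let θ₁,…,θₙ be real random variables on a probability space, let C ∈ ℝ be a threshold and let p ∈ (0,1). For each i let Fᵢ(x) = P(θᵢ ≤ x) and let qᵢ = inf{x ∈ ℝ : Fᵢ(x) ≥ 1−p} be the posterior (1−p)-quantile of θᵢ. Then the vector q = (q₁,…,qₙ) minimises the expected weighted threshold classification loss: for every δ ∈ ℝⁿ, E[TCL_p(C,θ,δ)] ≥ E[TCL_p(C,θ,q)]. -/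
open MeasureTheory

/-- The `p`-weighted threshold classification loss
`TCL_p(C, θ, δ) = (1/n) Σᵢ [p · 1{θᵢ ≤ C, δᵢ > C} + (1−p) · 1{θᵢ > C, δᵢ ≤ C}]`. -/
noncomputable def TCLw (n : ℕ) (p C : ℝ) (θ δ : Fin n → ℝ) : ℝ :=
  (1 / (n : ℝ)) * ∑ i, (p * (if θ i ≤ C ∧ C < δ i then (1 : ℝ) else 0)
    + (1 - p) * (if C < θ i ∧ δ i ≤ C then (1 : ℝ) else 0))

/-!
The expected loss of a single decision `d` is `p · F(C)` when `d > C` and `(1 - p) · (1 - F(C))`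
when `d ≤ C`, where `F` is the distribution function of the parameter; their difference is
`F(C) - (1 - p)`. So the best decision lies at or below `C` exactly when `1 - p ≤ F(C)`, and by
right continuity of `F` this is exactly when the `(1 - p)`-quantile lies at or below `C`.
-/

open ProbabilityTheory Set

lemma StieltjesFunction.sInf_le_iff_le_apply (f : StieltjesFunction ℝ) {c : ℝ}
    (hne : ∃ x, c ≤ f x) (hlow : ∃ y, f y < c) (C : ℝ) :
    sInf {x | c ≤ f x} ≤ C ↔ c ≤ f C := by
  obtain ⟨y, hy⟩ := hlow
  have hbdd : BddBelow {x | c ≤ f x} :=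
    ⟨y, fun x hx => le_of_lt (f.mono.reflect_lt (hy.trans_le hx))⟩
  refine ⟨fun h => ?_, fun h => csInf_le hbdd h⟩
  have above : ∀ x, C < x → c ≤ f x := fun x hx => by
    obtain ⟨s, hs, hsx⟩ := (csInf_lt_iff hbdd hne).1 (h.trans_lt hx)
    exact hs.trans (f.mono hsx.le)
  exact ge_of_tendsto ((f.right_continuous C).mono Ioi_subset_Ici_self)
    (eventually_nhdsWithin_of_forall above)

namespace ProbabilityTheory

noncomputable def quantile (ν : Measure ℝ) (r : ℝ) : ℝ :=
  sInf {x | r ≤ cdf ν x}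

lemma quantile_le_iff (ν : Measure ℝ) [IsProbabilityMeasure ν] {r : ℝ} (hr : r ∈ Ioo 0 1)
    (C : ℝ) : quantile ν r ≤ C ↔ r ≤ cdf ν C :=
  (cdf ν).sInf_le_iff_le_apply ((tendsto_cdf_atTop ν).eventually_const_le hr.2).exists
    ((tendsto_cdf_atBot ν).eventually_lt_const hr.1).exists C

lemma cdf_map_eq_toReal {Ω : Type*} [MeasurableSpace Ω] (μ : Measure Ω)
    [IsProbabilityMeasure μ] {X : Ω → ℝ} (hX : Measurable X) (x : ℝ) :
    cdf (μ.map X) x = (μ {ω | X ω ≤ x}).toReal := by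
  have := Measure.isProbabilityMeasure_map (μ := μ) hX.aemeasurable
  rw [cdf_eq_real, measureReal_def, Measure.map_apply hX measurableSet_Iic]
  rfl

end ProbabilityTheory

noncomputable def thresholdLoss (p C t d : ℝ) : ℝ :=
  p * (if t ≤ C ∧ C < d then 1 else 0) + (1 - p) * (if C < t ∧ d ≤ C then 1 else 0)

lemma TCLw_eq_sum_thresholdLoss (n : ℕ) (p C : ℝ) (θ δ : Fin n → ℝ) :
    TCLw n p C θ δ = (1 / (n : ℝ)) * ∑ i, thresholdLoss p C (θ i) (δ i) :=
  rfl

lemma thresholdLoss_eq_indicator (p C d : ℝ) :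
    (thresholdLoss p C · d) =
      if C < d then (Iic C).indicator (fun _ => p) else (Ioi C).indicator (fun _ => 1 - p) := by
  ext t
  by_cases hd : C < d <;> by_cases ht : t ≤ C <;> simp [thresholdLoss, hd, ht, not_le.1]

section ExpectedLoss

variable (ν : Measure ℝ) (p C d : ℝ)

lemma integrable_thresholdLoss [IsFiniteMeasure ν] : Integrable (thresholdLoss p C · d) ν := by
  rw [thresholdLoss_eq_indicator]
  split_ifs
  · exact (integrable_const p).indicator measurableSet_Iic
  · exact (integrable_const (1 - p)).indicator measurableSet_Ioi

variable [IsProbabilityMeasure ν]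

lemma integral_thresholdLoss :
    ∫ t, thresholdLoss p C t d ∂ν =
      if C < d then p * cdf ν C else (1 - p) * (1 - cdf ν C) := by
  rw [thresholdLoss_eq_indicator]
  split_ifs
  · rw [integral_indicator_const _ measurableSet_Iic, cdf_eq_real, smul_eq_mul, mul_comm]
  · rw [integral_indicator_const _ measurableSet_Ioi, cdf_eq_real, ← compl_Iic,
      measureReal_compl measurableSet_Iic, probReal_univ, smul_eq_mul, mul_comm]

lemma integral_thresholdLoss_quantile_le {p : ℝ} (hp : p ∈ Ioo 0 1) :
    ∫ t, thresholdLoss p C t (quantile ν (1 - p)) ∂ν ≤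
      ∫ t, thresholdLoss p C t d ∂ν := by
  have hr : 1 - p ∈ Ioo 0 1 := ⟨sub_pos.2 hp.2, sub_lt_self 1 hp.1⟩
  rw [integral_thresholdLoss, integral_thresholdLoss]
  by_cases hqC : quantile ν (1 - p) ≤ C
  · have hF : 1 - p ≤ cdf ν C := (quantile_le_iff ν hr C).1 hqC
    rw [if_neg hqC.not_gt]
    split_ifs <;> linarith
  · have hF : cdf ν C < 1 - p := not_le.1 (mt (quantile_le_iff ν hr C).2 hqC)
    rw [if_pos (not_le.1 hqC)]
    split_ifs <;> linarith

end ExpectedLoss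

lemma integral_TCLw {Ω : Type*} [MeasurableSpace Ω] (μ : Measure Ω) [IsFiniteMeasure μ]
    {n : ℕ} (θ : Fin n → Ω → ℝ) (hθ : ∀ i, Measurable (θ i)) (p C : ℝ)
    (δ : Fin n → ℝ) :
    ∫ ω, TCLw n p C (fun i => θ i ω) δ ∂μ =
      (1 / (n : ℝ)) * ∑ i, ∫ t, thresholdLoss p C t (δ i) ∂(μ.map (θ i)) := by
  have integrable (i : Fin n) : Integrable (fun ω => thresholdLoss p C (θ i ω) (δ i)) μ :=
    (integrable_thresholdLoss _ p C (δ i)).comp_measurable (hθ i)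
  simp only [TCLw_eq_sum_thresholdLoss]
  rw [integral_const_mul, integral_finsetSum _ fun i _ => integrable i]
  congr 1
  refine Finset.sum_congr rfl fun i _ => ?_
  exact integral_map (hθ i).aemeasurable
    (integrable_thresholdLoss _ p C (δ i)).aestronglyMeasurable |>.symm

/-- **Optimality of posterior quantiles under weighted threshold classification loss.**
The vector of posterior `(1−p)`-quantiles minimises the expected `p`-weighted threshold
classification loss. -/
theorem tcl_weighted_quantile_optimal
    {Ω : Type*} [MeasurableSpace Ω] (μ : Measure Ω) [IsProbabilityMeasure μ]
    {n : ℕ} (θ : Fin n → Ω → ℝ) (hθ : ∀ i, Measurable (θ i))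
    (C p : ℝ) (hp : p ∈ Set.Ioo (0 : ℝ) 1)
    (q : Fin n → ℝ)
    (hq : ∀ i, q i = sInf {x : ℝ | 1 - p ≤ (μ {ω | θ i ω ≤ x}).toReal}) :
    ∀ δ : Fin n → ℝ,
      ∫ ω, TCLw n p C (fun i => θ i ω) q ∂μ ≤
        ∫ ω, TCLw n p C (fun i => θ i ω) δ ∂μ := by
  intro δ
  rw [integral_TCLw μ θ hθ, integral_TCLw μ θ hθ]
  gcongr (1 / (n : ℝ)) * ∑ i, ?_ with i
  have := Measure.isProbabilityMeasure_map (μ := μ) (hθ i).aemeasurable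
  have hqi : q i = quantile (μ.map (θ i)) (1 - p) := by
    simp only [hq i, quantile, cdf_map_eq_toReal μ (hθ i)]
  rw [hqi]
  exact integral_thresholdLoss_quantile_le (μ.map (θ i)) C (δ i) hp
end

section
/- Optimality of ranked posterior exceedance probabilities under rank classification loss (Lin et al.): Let θ = (θ₁,…,θₙ) be a random vector in ℝⁿ on a probability space with P(θᵢ = θⱼ) = 0 for all i ≠ j, and let γ ∈ [0,1] be such that γ ≠ k/(n+1) for every integer k with 1 ≤ k ≤ n. For each i let πᵢ = P(Pᵢ(θ) ≥ γ), assume the πᵢ are pairwise distinct, and define the estimated percentile ranks P̂ᵢ = Rᵢ(π)/(n+1), where Rᵢ(π) = Σⱼ1{πᵢ ≥ πⱼ}. Then P̂ minimises the expected rank classification loss among all percentile-rank vectors: for every permutation σ of {1,…,n}, with δ_σ defined by (δ_σ)ᵢ = σ(i)/(n+1), one has E[RCL(γ,θ,P̂)] ≤ E[RCL(γ,θ,δ_σ)]. -/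
open MeasureTheory

/-- The rank of the `i`-th component of `x`: `Rᵢ(x) = Σⱼ 1{xᵢ ≥ xⱼ}`. -/
noncomputable def rankOf {n : ℕ} (x : Fin n → ℝ) (i : Fin n) : ℕ :=
  (Finset.univ.filter fun j => x j ≤ x i).card

/-- The percentile rank of the `i`-th component: `Pᵢ(x) = Rᵢ(x)/(n+1)`. -/
noncomputable def percOf {n : ℕ} (x : Fin n → ℝ) (i : Fin n) : ℝ :=
  (rankOf x i : ℝ) / ((n : ℝ) + 1)

/-- The rank classification loss
`RCL(γ, x, δ) = (1/n) Σᵢ [1{Pᵢ(x) ≤ γ, δᵢ > γ} + 1{Pᵢ(x) > γ, δᵢ ≤ γ}]`. -/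
noncomputable def RCL (n : ℕ) (γ : ℝ) (x δ : Fin n → ℝ) : ℝ :=
  (1 / (n : ℝ)) * ∑ i, ((if percOf x i ≤ γ ∧ γ < δ i then (1 : ℝ) else 0)
    + (if γ < percOf x i ∧ δ i ≤ γ then (1 : ℝ) else 0))

/-!
Since the percentile ranks of `θ` never equal `γ`, the expected loss of a decision vector `δ`
is `(1/n) Σᵢ (πᵢ if δᵢ ≤ γ, else 1 - πᵢ)`, i.e. up to a constant `(1/n) Σ_{i ∈ S} (2πᵢ - 1)` with
`S = {i | δᵢ ≤ γ}`. For a percentile-rank vector the size of `S` does not depend on the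
permutation, and among sets of a given size the sum is smallest on the indices of the smallest
`πᵢ`, which is the set `P̂` selects.
-/

open Finset

theorem Finset.sum_le_sum_of_card_eq {ι M : Type*} [AddCommMonoid M] [LinearOrder M]
    [IsOrderedCancelAddMonoid M] {f : ι → M} {s t : Finset ι} (hst : #s = #t)
    (h : ∀ i ∈ s, ∀ j ∉ s, f i ≤ f j) :
    ∑ i ∈ s, f i ≤ ∑ i ∈ t, f i := by
  classical
  rcases (s \ t).eq_empty_or_nonempty with hempty | hne
  · rw [eq_of_subset_of_card_le (sdiff_eq_empty_iff_subset.1 hempty) hst.ge]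
  set c := (s \ t).sup' hne f
  calc ∑ i ∈ s, f i = ∑ i ∈ s ∩ t, f i + ∑ i ∈ s \ t, f i := (sum_inter_add_sum_sdiff s t f).symm
    _ ≤ ∑ i ∈ s ∩ t, f i + #(s \ t) • c := by
      gcongr
      exact sum_le_card_nsmul _ _ _ fun i hi => le_sup' f hi
    _ = ∑ i ∈ t ∩ s, f i + #(t \ s) • c := by rw [inter_comm, card_sdiff_comm hst]
    _ ≤ ∑ i ∈ t ∩ s, f i + ∑ i ∈ t \ s, f i := by
      gcongr
      exact card_nsmul_le_sum _ _ _ fun j hj =>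
        sup'_le hne f fun i hi => h i (mem_sdiff.1 hi).1 j (mem_sdiff.1 hj).2
    _ = ∑ i ∈ t, f i := sum_inter_add_sum_sdiff t s f

theorem sum_ite_le_sum_ite_of_card_filter_eq {ι : Type*} [Fintype ι] {π : ι → ℝ}
    {p q : ι → Prop} [DecidablePred p] [DecidablePred q] (hpq : #{i | p i} = #{i | q i})
    (h : ∀ i j, p i → ¬ p j → π i ≤ π j) :
    ∑ i, (if p i then π i else 1 - π i) ≤ ∑ i, (if q i then π i else 1 - π i) := by
  have split : ∀ (r : ι → Prop) [DecidablePred r],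
      ∑ i, (if r i then π i else 1 - π i) = ∑ i, (1 - π i) + ∑ i ∈ {i | r i}, (2 * π i - 1) := by
    intro r _
    rw [sum_filter, ← sum_add_distrib]
    exact sum_congr rfl fun i _ => by split_ifs <;> ring
  rw [split p, split q]
  suffices ∑ i ∈ {i | p i}, (2 * π i - 1) ≤ ∑ i ∈ {i | q i}, (2 * π i - 1) by linarith
  refine sum_le_sum_of_card_eq hpq fun i hi j hj => ?_
  have := h i j (mem_filter.1 hi).2 (fun hpj => hj (mem_filter.2 ⟨mem_univ j, hpj⟩))
  linarith

theorem card_filter_comp_equiv {α β : Type*} [Fintype α] [Fintype β] (e : α ≃ β)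
    (p : β → Prop) [DecidablePred p] : #{i | p (e i)} = #{j | p j} := by
  simp only [card_filter]
  exact e.sum_comp fun j => if p j then 1 else 0

/-- The paper's `δ_σ`; the `+ 1` is there because `Fin n` is indexed from `0`. -/
noncomputable def permPercentile {n : ℕ} (σ : Equiv.Perm (Fin n)) : Fin n → ℝ :=
  fun i => (((σ i : Fin n) : ℕ) + 1 : ℝ) / ((n : ℝ) + 1)

theorem card_filter_permPercentile_le_eq {n : ℕ} (σ τ : Equiv.Perm (Fin n)) (γ : ℝ) :
    #{i | permPercentile σ i ≤ γ} = #{i | permPercentile τ i ≤ γ} :=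
  let p : Fin n → Prop := fun k => ((k : ℕ) + 1 : ℝ) / ((n : ℝ) + 1) ≤ γ
  (card_filter_comp_equiv σ p).trans (card_filter_comp_equiv τ p).symm

section Rank

variable {n : ℕ} (x : Fin n → ℝ)

theorem one_le_rankOf (i : Fin n) : 1 ≤ rankOf x i :=
  card_pos.2 ⟨i, mem_filter.2 ⟨mem_univ i, le_rfl⟩⟩

theorem rankOf_le (i : Fin n) : rankOf x i ≤ n :=
  (card_filter_le _ _).trans (card_univ.trans (Fintype.card_fin n)).le

theorem rankOf_lt_rankOf {i j : Fin n} (h : x i < x j) : rankOf x i < rankOf x j := by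
  refine card_lt_card ⟨fun k hk => mem_filter.2 ⟨mem_univ k, (mem_filter.1 hk).2.trans h.le⟩,
    fun hsub => ?_⟩
  exact (mem_filter.1 (hsub (mem_filter.2 ⟨mem_univ j, le_rfl⟩))).2.not_gt h

theorem rankOf_injective (hx : Function.Injective x) : Function.Injective (rankOf x) := by
  intro i j hij
  by_contra hne
  rcases (hx.ne hne).lt_or_gt with h | h
  · exact (rankOf_lt_rankOf x h).ne hij
  · exact (rankOf_lt_rankOf x h).ne' hij

theorem le_of_percOf_le {i j : Fin n} (h : percOf x i ≤ percOf x j) : x i ≤ x j := by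
  by_contra! hji
  have hrank : (rankOf x i : ℝ) ≤ rankOf x j :=
    (div_le_div_iff_of_pos_right (by positivity)).1 h
  exact (rankOf_lt_rankOf x hji).not_ge (by exact_mod_cast hrank)

noncomputable def rankPerm (hx : Function.Injective x) : Equiv.Perm (Fin n) :=
  Equiv.ofBijective
    (fun i => ⟨rankOf x i - 1, by have := rankOf_le x i; have := one_le_rankOf x i; omega⟩)
    (Finite.injective_iff_bijective.1 fun i j hij => rankOf_injective x hx <| by
      have := one_le_rankOf x i; have := one_le_rankOf x j
      have := congrArg Fin.val hij; dsimp only at this; omega)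

theorem rankPerm_add_one (hx : Function.Injective x) (i : Fin n) :
    (rankPerm x hx i : ℕ) + 1 = rankOf x i := by
  have := one_le_rankOf x i
  simp only [rankPerm, Equiv.ofBijective_apply]
  omega

theorem percOf_eq_permPercentile_rankPerm (hx : Function.Injective x) :
    percOf x = permPercentile (rankPerm x hx) := funext fun i => by
  rw [percOf, permPercentile, ← rankPerm_add_one x hx i]
  push_cast
  rfl

theorem percOf_ne {γ : ℝ} (hγk : ∀ k : ℕ, 1 ≤ k → k ≤ n → γ ≠ (k : ℝ) / ((n : ℝ) + 1))
    (i : Fin n) : percOf x i ≠ γ :=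
  (hγk _ (one_le_rankOf x i) (rankOf_le x i)).symm

end Rank

section ExpectedLoss

variable {Ω : Type*} [MeasurableSpace Ω] {n : ℕ} {θ : Fin n → Ω → ℝ}

theorem measurable_percOf (hθ : ∀ i, Measurable (θ i)) (i : Fin n) :
    Measurable fun ω => percOf (fun j => θ j ω) i := by
  have hrank : (fun ω => (rankOf (fun j => θ j ω) i : ℝ))
      = fun ω => ∑ j, if θ j ω ≤ θ i ω then (1 : ℝ) else 0 := by
    ext ω
    simp only [rankOf, card_filter, Nat.cast_sum, Nat.cast_ite, Nat.cast_one, Nat.cast_zero]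
  refine Measurable.div_const ?_ _
  rw [hrank]
  exact Finset.measurable_sum _ fun j _ =>
    Measurable.ite (measurableSet_le (hθ j) (hθ i)) measurable_const measurable_const

theorem integral_RCL (μ : Measure Ω) [IsProbabilityMeasure μ] (hθ : ∀ i, Measurable (θ i))
    (γ : ℝ) (δ : Fin n → ℝ) :
    ∫ ω, RCL n γ (fun j => θ j ω) δ ∂μ = (1 / (n : ℝ)) * ∑ i,
      if δ i ≤ γ then μ.real {ω | γ < percOf (fun j => θ j ω) i}
      else 1 - μ.real {ω | γ < percOf (fun j => θ j ω) i} := by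
  set A : Fin n → Set Ω := fun i => {ω | γ < percOf (fun j => θ j ω) i}
  have hA : ∀ i, MeasurableSet (A i) := fun i =>
    measurableSet_lt measurable_const (measurable_percOf hθ i)
  have hB : ∀ i, MeasurableSet (if δ i ≤ γ then A i else (A i)ᶜ) := fun i => by
    split_ifs
    exacts [hA i, (hA i).compl]
  have hsummand : ∀ ω i,
      ((if percOf (fun j => θ j ω) i ≤ γ ∧ γ < δ i then (1 : ℝ) else 0)
        + (if γ < percOf (fun j => θ j ω) i ∧ δ i ≤ γ then (1 : ℝ) else 0))
      = (if δ i ≤ γ then A i else (A i)ᶜ).indicator 1 ω := by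
    intro ω i
    by_cases hδ : δ i ≤ γ <;> by_cases hP : γ < percOf (fun j => θ j ω) i <;>
      simp [A, hδ, hP, not_lt.1, not_le.1]
  simp only [RCL, hsummand]
  rw [integral_const_mul, integral_finsetSum _ fun i _ => (integrable_const 1).indicator (hB i)]
  refine congrArg _ (sum_congr rfl fun i _ => ?_)
  rw [integral_indicator_one (hB i)]
  split_ifs
  exacts [rfl, probReal_compl_eq_one_sub (hA i)]

end ExpectedLoss

theorem rcl_optimal_general
    {Ω : Type*} [MeasurableSpace Ω] (μ : Measure Ω) [IsProbabilityMeasure μ]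
    {n : ℕ} (θ : Fin n → Ω → ℝ) (hθ : ∀ i, Measurable (θ i))
    (γ : ℝ)
    (hγk : ∀ k : ℕ, 1 ≤ k → k ≤ n → γ ≠ (k : ℝ) / ((n : ℝ) + 1))
    (π : Fin n → ℝ)
    (hπ : ∀ i, π i = (μ {ω | γ ≤ percOf (fun j => θ j ω) i}).toReal)
    (hπd : Function.Injective π)
    (Phat : Fin n → ℝ)
    (hPhat : ∀ i, Phat i =
      ((Finset.univ.filter fun j => π j ≤ π i).card : ℝ) / ((n : ℝ) + 1)) :
    ∀ σ : Equiv.Perm (Fin n),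
      ∫ ω, RCL n γ (fun j => θ j ω) Phat ∂μ ≤
        ∫ ω, RCL n γ (fun j => θ j ω)
          (fun i => (((σ i : Fin n) : ℕ) + 1 : ℝ) / ((n : ℝ) + 1)) ∂μ := by
  intro σ
  have hπ_lt : ∀ i, π i = μ.real {ω | γ < percOf (fun j => θ j ω) i} := fun i => by
    rw [hπ i, measureReal_def]
    congr 2
    ext ω
    exact (percOf_ne _ hγk i).symm.le_iff_lt
  have hPhat_perc : Phat = percOf π := funext hPhat
  rw [integral_RCL μ hθ, integral_RCL μ hθ, hPhat_perc]
  simp only [← hπ_lt]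
  gcongr 1 / _ * ?_
  refine sum_ite_le_sum_ite_of_card_filter_eq ?_
    fun i j hi hj => le_of_percOf_le π (hi.trans (not_le.1 hj).le)
  rw [percOf_eq_permPercentile_rankPerm π hπd]
  exact card_filter_permPercentile_le_eq _ σ γ

/-- **Optimality of ranked posterior exceedance probabilities under rank classification
loss (Lin et al., 2006).** The percentile ranks of the posterior probabilities
`πᵢ = P(Pᵢ(θ) ≥ γ)` minimise the expected rank classification loss among all
percentile-rank vectors. -/
theorem rcl_optimal
    {Ω : Type*} [MeasurableSpace Ω] (μ : Measure Ω) [IsProbabilityMeasure μ]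
    {n : ℕ} (θ : Fin n → Ω → ℝ) (hθ : ∀ i, Measurable (θ i))
    (hdistinct : ∀ i j, i ≠ j → μ {ω | θ i ω = θ j ω} = 0)
    (γ : ℝ) (hγ : γ ∈ Set.Icc (0 : ℝ) 1)
    (hγk : ∀ k : ℕ, 1 ≤ k → k ≤ n → γ ≠ (k : ℝ) / ((n : ℝ) + 1))
    (π : Fin n → ℝ)
    (hπ : ∀ i, π i = (μ {ω | γ ≤ percOf (fun j => θ j ω) i}).toReal)
    (hπd : Function.Injective π)
    (Phat : Fin n → ℝ)
    (hPhat : ∀ i, Phat i =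
      ((Finset.univ.filter fun j => π j ≤ π i).card : ℝ) / ((n : ℝ) + 1)) :
    ∀ σ : Equiv.Perm (Fin n),
      ∫ ω, RCL n γ (fun j => θ j ω) Phat ∂μ ≤
        ∫ ω, RCL n γ (fun j => θ j ω)
          (fun i => (((σ i : Fin n) : ℕ) + 1 : ℝ) / ((n : ℝ) + 1)) ∂μ :=
  rcl_optimal_general μ θ hθ γ hγk π hπ hπd Phat hPhat
end
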